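/- arXiv:1509.01993 — 2 statements merged into one kernel-verified Lean document; each statement's English description precedes it below -/
import Mathlib

section
/- (Short time logarithmic asymptotics equal the combinatorial distance, unitary group.) Let X be a countable set, G a connected simple graph on X with combinatorial graph distance d_G, and let v : X → H and the bounded nonnegative self-adjoint operator L on the complex Hilbert space H be a Laplacian based on G with respect to v. Then for all x, y ∈ X, the limit as t → 0⁺ of log|⟪v x, e^{−itL} (v y)⟫| / log t exists and equals d_G(x,y). -/
open scoped InnerProductSpace
open Filter Topology

set_option maxHeartbeats 1000000 in
/-- **Short time logarithmic asymptotics equal the combinatorial distance (unitary group).**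
Let `G` be a connected simple graph on a countable set `X`, `v : X → H` a family of
nonzero pairwise orthogonal vectors with dense span in the complex Hilbert space `H`, and
`L` a bounded nonnegative selfadjoint operator which is a Laplacian based on `G` with
respect to `v`. Then `log|⟪v x, e^{−itL} v y⟫| / log t → d_G(x,y)` as `t → 0⁺`. -/
theorem log_asymptotics_unitary_group
    {X : Type*} [Countable X] (G : SimpleGraph X) (hG : G.Connected)
    {H : Type*} [NormedAddCommGroup H] [InnerProductSpace ℂ H] [CompleteSpace H]
    (v : X → H) (hv : ∀ x, v x ≠ 0)
    (horth : ∀ x y : X, x ≠ y → ⟪v x, v y⟫_ℂ = 0)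
    (hdense : Dense ((Submodule.span ℂ (Set.range v) : Submodule ℂ H) : Set H))
    (L : H →L[ℂ] H) (hL : IsSelfAdjoint L)
    (hpos : ∀ f : H, 0 ≤ (⟪f, L f⟫_ℂ).re)
    (hlap : ∀ x y : X, x ≠ y →
      (⟪v x, L (v y)⟫_ℂ).im = 0 ∧ (⟪v x, L (v y)⟫_ℂ).re ≤ 0 ∧
        ((⟪v x, L (v y)⟫_ℂ).re < 0 ↔ G.Adj x y)) :
    ∀ x y : X,
      Tendsto (fun t : ℝ =>
          Real.log ‖⟪v x, (NormedSpace.exp ((-(Complex.I * (t : ℂ))) • L)) (v y)⟫_ℂ‖ /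
            Real.log t)
        (𝓝[>] (0 : ℝ)) (𝓝 (G.dist x y : ℝ)) := by
  classical
  -- selfadjointness
  have hsa : ∀ u w : H, ⟪L u, w⟫_ℂ = ⟪u, L w⟫_ℂ := by
    intro u w
    conv_lhs => rw [← hL.adjoint_eq]
    rw [ContinuousLinearMap.adjoint_inner_left]
  -- entries
  have hentry0 : ∀ x z : X, x ≠ z → ¬ G.Adj x z → ⟪v x, L (v z)⟫_ℂ = 0 := by
    intro x z hxz hadj
    obtain ⟨him, hre, hiff⟩ := hlap x z hxz
    have h0 : (⟪v x, L (v z)⟫_ℂ).re = 0 := le_antisymm hre (not_lt.mp (fun h => hadj (hiff.mp h)))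
    rw [Complex.ext_iff]
    simp [h0, him]
  have hentryA : ∀ x z : X, G.Adj x z → ∃ s : ℝ, s < 0 ∧ ⟪v x, L (v z)⟫_ℂ = (s : ℂ) := by
    intro x z hadj
    obtain ⟨him, hre, hiff⟩ := hlap x z hadj.ne
    refine ⟨(⟪v x, L (v z)⟫_ℂ).re, hiff.mpr hadj, ?_⟩
    rw [Complex.ext_iff]
    simp [him]
  -- the Hilbert basis
  have hnz : ∀ z, (‖v z‖ : ℂ) ≠ 0 := fun z => by
    simpa using (norm_ne_zero_iff.mpr (hv z))
  obtain ⟨b, hb⟩ : ∃ b : HilbertBasis X ℂ H, ∀ z, b z = (‖v z‖ : ℂ)⁻¹ • v z := by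
    set e : X → H := fun z => (‖v z‖ : ℂ)⁻¹ • v z with he
    have hon : Orthonormal ℂ e := by
      rw [orthonormal_iff_ite]
      intro i j
      simp only [he, inner_smul_left, inner_smul_right, map_inv₀, Complex.conj_ofReal]
      by_cases h : i = j
      · subst h
        have h0 : (‖v i‖ : ℂ) ≠ 0 := hnz i
        rw [if_pos rfl, inner_self_eq_norm_sq_to_K]
        field_simp
        rfl
      · rw [horth i j h]
        simp [h]
    have hspan : Submodule.span ℂ (Set.range e) = Submodule.span ℂ (Set.range v) := by
      apply le_antisymm
      · rw [Submodule.span_le]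
        rintro _ ⟨z, rfl⟩
        exact Submodule.smul_mem _ _ (Submodule.subset_span ⟨z, rfl⟩)
      · rw [Submodule.span_le]
        rintro _ ⟨z, rfl⟩
        have : v z = (‖v z‖ : ℂ) • e z := by
          rw [he]; simp [smul_smul, mul_inv_cancel₀ (hnz z)]
        rw [this]
        exact Submodule.smul_mem _ _ (Submodule.subset_span ⟨z, rfl⟩)
    have htop : ⊤ ≤ (Submodule.span ℂ (Set.range e)).topologicalClosure := by
      rw [hspan]
      intro h _
      exact (Submodule.dense_iff_topologicalClosure_eq_top.mp hdense) ▸ trivial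
    exact ⟨HilbertBasis.mk hon htop, fun z => by rw [HilbertBasis.coe_mk]⟩
  have hbL : ∀ (x : X) (z : X), ⟪v x, L (b z)⟫_ℂ = (‖v z‖ : ℂ)⁻¹ * ⟪v x, L (v z)⟫_ℂ := by
    intro x z
    rw [hb, map_smul, inner_smul_right]
  have hbR : ∀ (z : X) (w : H), ⟪b z, w⟫_ℂ = (‖v z‖ : ℂ)⁻¹ * ⟪v z, w⟫_ℂ := by
    intro z w
    rw [hb, inner_smul_left, map_inv₀, Complex.conj_ofReal]
  -- the recursion
  have hrec : ∀ (x : X) (w : H),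
      HasSum (fun z => ⟪v x, L (b z)⟫_ℂ * ⟪b z, w⟫_ℂ) ⟪v x, L w⟫_ℂ := by
    intro x w
    have h := b.hasSum_inner_mul_inner (L (v x)) w
    simpa only [hsa] using h
  have hstep : ∀ (k : ℕ) (w : H), (L ^ (k + 1)) w = L ((L ^ k) w) := by
    intro k w
    rw [pow_succ']
    rfl
  -- vanishing below the distance
  have hvan : ∀ (k : ℕ) (x y : X), k < G.dist x y → ⟪v x, (L ^ k) (v y)⟫_ℂ = 0 := by
    intro k
    induction k with
    | zero =>
      intro x y hk
      have hxy : x ≠ y := by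
        intro h; subst h; rw [SimpleGraph.dist_self] at hk; omega
      simpa using horth x y hxy
    | succ k ih =>
      intro x y hk
      rw [hstep]
      have hs := hrec x ((L ^ k) (v y))
      have hz : ∀ z, ⟪v x, L (b z)⟫_ℂ * ⟪b z, (L ^ k) (v y)⟫_ℂ = 0 := by
        intro z
        by_cases hzx : x = z
        · subst hzx
          rw [hbR, ih x y (by omega), mul_zero, mul_zero]
        · by_cases hadj : G.Adj x z
          · have h1 : G.dist x y ≤ 1 + G.dist z y := by
              have h2 : G.dist x y ≤ G.dist x z + G.dist z y := hG.dist_triangle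
              rwa [SimpleGraph.dist_eq_one_iff_adj.mpr hadj] at h2
            rw [hbR, ih z y (by omega), mul_zero, mul_zero]
          · rw [hbL, hentry0 x z hzx hadj, mul_zero, zero_mul]
      rw [funext hz] at hs
      exact hs.unique hasSum_zero
  -- sign and nonvanishing at the distance
  have hsgn : ∀ (k : ℕ) (x y : X), G.dist x y = k →
      ∃ r : ℝ, 0 < r ∧ ⟪v x, (L ^ k) (v y)⟫_ℂ = (-1 : ℂ) ^ k * (r : ℂ) := by
    intro k
    induction k with
    | zero =>
      intro x y hk
      have hxy : x = y := (hG.dist_eq_zero_iff).mp hk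
      subst hxy
      have hpx : 0 < ‖v x‖ := norm_pos_iff.mpr (hv x)
      refine ⟨‖v x‖ ^ 2, by positivity, ?_⟩
      simp [inner_self_eq_norm_sq_to_K]
    | succ k ih =>
      intro x y hk
      set u : ℂ := (-1 : ℂ) ^ (k + 1) with hu
      have huu : u * u = 1 := by
        rw [hu, ← pow_add, ← two_mul, pow_mul]
        norm_num
      set c : X → ℂ := fun z => ⟪v x, L (b z)⟫_ℂ * ⟪b z, (L ^ k) (v y)⟫_ℂ with hc
      have hs : HasSum c ⟪v x, (L ^ (k+1)) (v y)⟫_ℂ := by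
        rw [hstep]; exact hrec x ((L ^ k) (v y))
      -- the adjacent geodesic case gives a positive contribution
      have hadjcase : ∀ z, G.Adj x z → G.dist z y = k → ∃ r : ℝ, 0 < r ∧ c z = u * (r : ℂ) := by
        intro z hadj hdz
        obtain ⟨r, hr, hrep⟩ := ih z y hdz
        obtain ⟨s, hsneg, hsrep⟩ := hentryA x z hadj
        have hpz : 0 < ‖v z‖ := norm_pos_iff.mpr (hv z)
        have hns : 0 < -s := neg_pos.mpr hsneg
        refine ⟨(‖v z‖)⁻¹ * (‖v z‖)⁻¹ * (-s) * r, by positivity, ?_⟩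
        rw [hc]
        simp only
        rw [hbL, hbR, hsrep, hrep, hu]
        push_cast
        ring
      -- each term is u times a nonnegative real
      have hterm : ∀ z, ∃ r : ℝ, 0 ≤ r ∧ c z = u * (r : ℂ) := by
        intro z
        by_cases hzx : x = z
        · subst hzx
          refine ⟨0, le_refl _, ?_⟩
          rw [hc]
          simp only
          rw [hbR, hvan k x y (by omega), mul_zero, mul_zero]
          simp
        · by_cases hadj : G.Adj x z
          · have h1 : G.dist x y ≤ 1 + G.dist z y := by
              have h2 : G.dist x y ≤ G.dist x z + G.dist z y := hG.dist_triangle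
              rwa [SimpleGraph.dist_eq_one_iff_adj.mpr hadj] at h2
            by_cases hdz : G.dist z y = k
            · obtain ⟨r, hr, hrep⟩ := hadjcase z hadj hdz
              exact ⟨r, le_of_lt hr, hrep⟩
            · refine ⟨0, le_refl _, ?_⟩
              rw [hc]
              simp only
              rw [hbR, hvan k z y (by omega), mul_zero, mul_zero]
              simp
          · refine ⟨0, le_refl _, ?_⟩
            rw [hc]
            simp only
            rw [hbL, hentry0 x z hzx hadj, mul_zero, zero_mul]
            simp
      -- existence of a geodesic neighbor
      obtain ⟨z₀, hadj₀, hdz₀⟩ : ∃ z, G.Adj x z ∧ G.dist z y = k := by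
        obtain ⟨p, hp⟩ := (hG x y).exists_walk_length_eq_dist
        cases p with
        | nil => rw [SimpleGraph.dist_self] at hk; omega
        | cons hadj q =>
          rename_i z
          refine ⟨z, hadj, ?_⟩
          have h1 : G.dist z y ≤ k := by
            have := SimpleGraph.dist_le q
            simp [SimpleGraph.Walk.length_cons, hk] at hp
            omega
          have h2 : G.dist x y ≤ G.dist x z + G.dist z y := hG.dist_triangle
          have h3 : G.dist x z ≤ 1 := by
            rw [SimpleGraph.dist_eq_one_iff_adj.mpr hadj]
          omega
      obtain ⟨r₀, hr₀, hrep₀⟩ := hadjcase z₀ hadj₀ hdz₀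
      -- combine
      set S := ⟪v x, (L ^ (k+1)) (v y)⟫_ℂ with hS
      have hs2 : HasSum (fun z => u * c z) (u * S) := hs.mul_left u
      have hval : ∀ z, ∃ r : ℝ, 0 ≤ r ∧ u * c z = (r : ℂ) := by
        intro z
        obtain ⟨r, hr, hrep⟩ := hterm z
        refine ⟨r, hr, ?_⟩
        rw [hrep, ← mul_assoc, huu, one_mul]
      have hre : HasSum (fun z => (u * c z).re) ((u * S).re) := Complex.reCLM.hasSum hs2
      have him : (u * S).im = 0 := by
        have himm : HasSum (fun z => (u * c z).im) ((u * S).im) := Complex.imCLM.hasSum hs2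
        have : ∀ z, (u * c z).im = 0 := by
          intro z
          obtain ⟨r, _, hrep⟩ := hval z
          rw [hrep]; simp
        rw [funext this] at himm
        exact himm.unique hasSum_zero
      have hpos0 : 0 < (u * S).re := by
        have hle : (u * c z₀).re ≤ (u * S).re := by
          refine le_hasSum hre z₀ ?_
          intro z hz
          obtain ⟨r, hr, hrep⟩ := hval z
          rw [hrep]; simpa using hr
        have heq : (u * c z₀).re = r₀ := by
          rw [hrep₀, ← mul_assoc, huu, one_mul]; simp
        rw [heq] at hle
        linarith
      refine ⟨(u * S).re, hpos0, ?_⟩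
      have hUS : u * S = ((u * S).re : ℂ) := by
        rw [Complex.ext_iff]
        simp [him]
      calc S = u * (u * S) := by rw [← mul_assoc, huu, one_mul]
        _ = u * ((u * S).re : ℂ) := by rw [← hUS]
  -- ANALYSIS PART
  intro x y
  set d := G.dist x y with hd
  set a : ℕ → ℂ := fun n => ⟪v x, (L ^ n) (v y)⟫_ℂ with ha
  have ha0 : ∀ n, n < d → a n = 0 := fun n hn => hvan n x y hn
  obtain ⟨r, hr, hrd⟩ := hsgn d x y rfl
  have hrdnorm : ‖a d‖ = r := by
    rw [ha]
    simp only
    rw [hrd, norm_mul, norm_pow, norm_neg, norm_one, one_pow, one_mul, Complex.norm_real,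
      Real.norm_eq_abs, abs_of_pos hr]
  set F : ℝ → ℂ := fun t => ⟪v x, (NormedSpace.exp ((-(Complex.I * (t : ℂ))) • L)) (v y)⟫_ℂ
    with hFdef
  set T : ℝ → ℕ → ℂ := fun t n =>
      ((n.factorial : ℂ))⁻¹ * ((-(Complex.I * (t : ℂ))) ^ n * a n) with hT
  have hFsum : ∀ t : ℝ, HasSum (T t) (F t) := by
    intro t
    have h := (NormedSpace.exp_series_hasSum_exp' (𝕂 := ℂ) ((-(Complex.I * (t : ℂ))) • L)).mapL
      ((innerSL ℂ (v x)).comp (ContinuousLinearMap.apply ℂ H (v y)))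
    have h2 : ∀ n : ℕ, ⟪v x, (((-(Complex.I * (t : ℂ))) • L) ^ n) (v y)⟫_ℂ
        = (-(Complex.I * (t : ℂ))) ^ n * a n := by
      intro n
      rw [smul_pow, ContinuousLinearMap.smul_apply, inner_smul_right, ha]
    simp only [ContinuousLinearMap.coe_comp', Function.comp_apply,
      ContinuousLinearMap.apply_apply, map_smul, innerSL_apply_apply, smul_eq_mul,
      ContinuousLinearMap.smul_apply, inner_smul_right] at h
    refine h.congr_fun ?_
    intro n
    rw [hT]
    simp only
    rw [h2 n]
  -- norm bounds
  have hLn : ∀ (n : ℕ) (w : H), ‖(L ^ n) w‖ ≤ ‖L‖ ^ n * ‖w‖ := by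
    intro n
    induction n with
    | zero => intro w; simp
    | succ n ih =>
      intro w
      rw [hstep]
      calc ‖L ((L ^ n) w)‖ ≤ ‖L‖ * ‖(L ^ n) w‖ := L.le_opNorm _
        _ ≤ ‖L‖ * (‖L‖ ^ n * ‖w‖) := mul_le_mul_of_nonneg_left (ih w) (norm_nonneg L)
        _ = ‖L‖ ^ (n + 1) * ‖w‖ := by ring
  set C₀ : ℝ := ‖v x‖ * ‖v y‖ with hC₀
  have haN : ∀ n, ‖a n‖ ≤ C₀ * ‖L‖ ^ n := by
    intro n
    calc ‖a n‖ ≤ ‖v x‖ * ‖(L ^ n) (v y)‖ := norm_inner_le_norm _ _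
      _ ≤ ‖v x‖ * (‖L‖ ^ n * ‖v y‖) :=
          mul_le_mul_of_nonneg_left (hLn n (v y)) (norm_nonneg _)
      _ = C₀ * ‖L‖ ^ n := by rw [hC₀]; ring
  have hC₀nonneg : 0 ≤ C₀ := by rw [hC₀]; positivity
  set B : ℕ → ℝ := fun n => C₀ * (‖L‖ ^ n / n.factorial) with hB
  have hBsum : Summable B := (Real.summable_pow_div_factorial ‖L‖).mul_left C₀
  have hBnonneg : ∀ n, 0 ≤ B n := by
    intro n
    rw [hB]
    simp only
    positivity
  set K : ℝ := ∑' n, B n with hK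
  have hKnonneg : 0 ≤ K := tsum_nonneg hBnonneg
  have hcnorm : ∀ t : ℝ, 0 ≤ t → ‖(-(Complex.I * (t : ℂ)))‖ = t := by
    intro t ht
    simp [abs_of_nonneg ht]
  have htermN : ∀ t : ℝ, 0 ≤ t → ∀ n, ‖T t n‖ ≤ t ^ n * B n := by
    intro t ht n
    rw [hT]
    simp only
    rw [norm_mul, norm_mul, norm_pow, hcnorm t ht, norm_inv, RCLike.norm_natCast]
    calc (n.factorial : ℝ)⁻¹ * (t ^ n * ‖a n‖)
        ≤ (n.factorial : ℝ)⁻¹ * (t ^ n * (C₀ * ‖L‖ ^ n)) := by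
          apply mul_le_mul_of_nonneg_left _ (by positivity)
          exact mul_le_mul_of_nonneg_left (haN n) (by positivity)
      _ = t ^ n * B n := by
          rw [hB]
          simp only
          field_simp
  set R : ℝ := r / d.factorial with hRdef
  have hR : 0 < R := by
    rw [hRdef]
    have : (0:ℝ) < d.factorial := by positivity
    positivity
  set δ : ℝ := min 1 (R / (2 * (K + 1))) with hδdef
  have hδ : 0 < δ := by
    rw [hδdef]
    apply lt_min one_pos
    positivity
  -- eventual bounds on ‖F t‖
  have hbound : ∀ t ∈ Set.Ioo (0:ℝ) δ,
      t ^ d * (R / 2) ≤ ‖F t‖ ∧ ‖F t‖ ≤ t ^ d * (2 * R) := by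
    intro t ht
    obtain ⟨ht0, htδ⟩ := ht
    have ht1 : t < 1 := lt_of_lt_of_le htδ (by rw [hδdef]; exact min_le_left _ _)
    have htK : t * K ≤ R / 2 := by
      have h1 : t ≤ R / (2 * (K + 1)) := le_of_lt (lt_of_lt_of_le htδ
        (by rw [hδdef]; exact min_le_right _ _))
      have h2 : t * K ≤ (R / (2 * (K + 1))) * (K + 1) := by
        apply mul_le_mul h1 (by linarith) hKnonneg (by positivity)
      have h3 : (R / (2 * (K + 1))) * (K + 1) = R / 2 := by
        field_simp
      linarith
    have hsum := hFsum t
    have hsum0 : ∑ i ∈ Finset.range (d + 1), T t i = T t d := by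
      apply Finset.sum_eq_single_of_mem d (Finset.self_mem_range_succ d)
      intro i hi hne
      have hid : i < d := by
        rw [Finset.mem_range] at hi
        omega
      rw [hT]
      simp only
      rw [ha0 i hid, mul_zero, mul_zero]
    have htail : HasSum (fun n => T t (n + (d + 1)))
        (F t - ∑ i ∈ Finset.range (d + 1), T t i) := by
      apply (hasSum_nat_add_iff (d + 1)).mpr
      simpa using hsum
    have hnormle : ∀ n : ℕ, ‖T t (n + (d + 1))‖ ≤ t ^ (d + 1) * B (n + (d + 1)) := by
      intro n
      calc ‖T t (n + (d + 1))‖ ≤ t ^ (n + (d + 1)) * B (n + (d + 1)) := htermN t ht0.le _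
        _ ≤ t ^ (d + 1) * B (n + (d + 1)) := by
            apply mul_le_mul_of_nonneg_right _ (hBnonneg _)
            exact pow_le_pow_of_le_one ht0.le ht1.le (by omega)
    have hsummable : Summable (fun n => t ^ (d + 1) * B (n + (d + 1))) :=
      ((summable_nat_add_iff (d + 1)).mpr hBsum).mul_left _
    have hsn : Summable (fun n => ‖T t (n + (d + 1))‖) :=
      Summable.of_nonneg_of_le (fun n => norm_nonneg _) hnormle hsummable
    have htb : ‖F t - T t d‖ ≤ t ^ (d + 1) * K := by
      have h1 : F t - T t d = F t - ∑ i ∈ Finset.range (d + 1), T t i := by rw [hsum0]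
      rw [h1]
      calc ‖F t - ∑ i ∈ Finset.range (d + 1), T t i‖
          = ‖∑' n, T t (n + (d + 1))‖ := by rw [htail.tsum_eq]
        _ ≤ ∑' n, ‖T t (n + (d + 1))‖ := norm_tsum_le_tsum_norm hsn
        _ ≤ ∑' n, t ^ (d + 1) * B (n + (d + 1)) := hsn.tsum_le_tsum hnormle hsummable
        _ = t ^ (d + 1) * ∑' n, B (n + (d + 1)) := tsum_mul_left
        _ ≤ t ^ (d + 1) * K := by
            apply mul_le_mul_of_nonneg_left _ (by positivity)
            have heq := hBsum.sum_add_tsum_nat_add (d + 1)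
            have hpart : 0 ≤ ∑ i ∈ Finset.range (d + 1), B i :=
              Finset.sum_nonneg (fun i _ => hBnonneg i)
            rw [hK]
            linarith
    have hTd : ‖T t d‖ = t ^ d * R := by
      rw [hT]
      simp only
      rw [norm_mul, norm_mul, norm_pow, hcnorm t ht0.le, norm_inv, RCLike.norm_natCast,
        hrdnorm, hRdef]
      field_simp
    have htK' : t ^ (d + 1) * K ≤ t ^ d * (R / 2) := by
      calc t ^ (d + 1) * K = t ^ d * (t * K) := by ring
        _ ≤ t ^ d * (R / 2) := mul_le_mul_of_nonneg_left htK (by positivity)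
    constructor
    · have h4 : ‖T t d‖ - ‖T t d - F t‖ ≤ ‖F t‖ := by
        have := norm_sub_norm_le (T t d) (F t)
        linarith
      have h5 : ‖T t d - F t‖ = ‖F t - T t d‖ := norm_sub_rev _ _
      rw [hTd] at h4
      rw [h5] at h4
      linarith
    · calc ‖F t‖ = ‖T t d + (F t - T t d)‖ := by ring_nf
        _ ≤ ‖T t d‖ + ‖F t - T t d‖ := norm_add_le _ _
        _ ≤ t ^ d * R + t ^ d * (R / 2) := by
            rw [hTd]
            have := le_trans htb htK'
            linarith
        _ ≤ t ^ d * (2 * R) := by nlinarith [pow_pos ht0 d]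
  -- logarithmic limit
  set M : ℝ := max |Real.log (R / 2)| |Real.log (2 * R)| with hM
  have hlogq : ∀ t ∈ Set.Ioo (0:ℝ) δ, |Real.log (‖F t‖ / t ^ d)| ≤ M := by
    intro t ht
    obtain ⟨hlow, hup⟩ := hbound t ht
    have htd : 0 < t ^ d := pow_pos ht.1 d
    have hq1 : R / 2 ≤ ‖F t‖ / t ^ d := (le_div_iff₀ htd).mpr (by linarith)
    have hq2 : ‖F t‖ / t ^ d ≤ 2 * R := (div_le_iff₀ htd).mpr (by linarith)
    have hqpos : 0 < ‖F t‖ / t ^ d := lt_of_lt_of_le (by linarith) hq1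
    rw [abs_le]
    constructor
    · calc -M ≤ -|Real.log (R / 2)| := by
            rw [hM]
            exact neg_le_neg (le_max_left _ _)
        _ ≤ Real.log (R / 2) := neg_abs_le _
        _ ≤ Real.log (‖F t‖ / t ^ d) := Real.log_le_log (by linarith) hq1
    · calc Real.log (‖F t‖ / t ^ d) ≤ Real.log (2 * R) := Real.log_le_log hqpos hq2
        _ ≤ |Real.log (2 * R)| := le_abs_self _
        _ ≤ M := by rw [hM]; exact le_max_right _ _
  have hmem : ∀ᶠ t in 𝓝[>] (0:ℝ), t ∈ Set.Ioo (0:ℝ) δ :=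
    Ioo_mem_nhdsGT_of_mem ⟨le_refl 0, hδ⟩
  have hlogt : Tendsto Real.log (𝓝[>] (0:ℝ)) atBot := Real.tendsto_log_nhdsGT_zero
  have habs : Tendsto (fun t : ℝ => |Real.log t|) (𝓝[>] (0:ℝ)) atTop :=
    tendsto_abs_atBot_atTop.comp hlogt
  have hinv : Tendsto (fun t : ℝ => |Real.log t|⁻¹) (𝓝[>] (0:ℝ)) (𝓝 0) :=
    habs.inv_tendsto_atTop
  have h0 : Tendsto (fun t : ℝ => Real.log (‖F t‖ / t ^ d) / Real.log t)
      (𝓝[>] (0:ℝ)) (𝓝 0) := by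
    apply squeeze_zero_norm' (a := fun t => M * |Real.log t|⁻¹)
    · filter_upwards [hmem] with t ht
      have ht1 : t < 1 := lt_of_lt_of_le ht.2 (by rw [hδdef]; exact min_le_left _ _)
      have hlt : Real.log t < 0 := Real.log_neg ht.1 ht1
      have hlta : 0 < |Real.log t| := abs_pos.mpr (ne_of_lt hlt)
      rw [Real.norm_eq_abs, abs_div]
      rw [div_eq_mul_inv]
      exact mul_le_mul_of_nonneg_right (hlogq t ht) (by positivity)
    · have := hinv.const_mul M
      simpa using this
  have heq : ∀ᶠ t in 𝓝[>] (0:ℝ),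
      (d : ℝ) + Real.log (‖F t‖ / t ^ d) / Real.log t = Real.log ‖F t‖ / Real.log t := by
    filter_upwards [hmem] with t ht
    have ht1 : t < 1 := lt_of_lt_of_le ht.2 (by rw [hδdef]; exact min_le_left _ _)
    have hlt : Real.log t < 0 := Real.log_neg ht.1 ht1
    have hltne : Real.log t ≠ 0 := ne_of_lt hlt
    have htd : 0 < t ^ d := pow_pos ht.1 d
    obtain ⟨hlow, _⟩ := hbound t ht
    have hFpos : 0 < ‖F t‖ := lt_of_lt_of_le (by positivity) hlow
    have hsplit : Real.log ‖F t‖ = (d : ℝ) * Real.log t + Real.log (‖F t‖ / t ^ d) := by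
      rw [Real.log_div (ne_of_gt hFpos) (ne_of_gt htd), Real.log_pow]
      push_cast
      ring
    rw [hsplit, add_div, mul_div_assoc, div_self hltne, mul_one]
  have hfinal : Tendsto (fun t : ℝ => (d : ℝ) + Real.log (‖F t‖ / t ^ d) / Real.log t)
      (𝓝[>] (0:ℝ)) (𝓝 ((d : ℝ) + 0)) := tendsto_const_nhds.add h0
  rw [add_zero] at hfinal
  exact hfinal.congr' heq
end

section
/- (Failure of Varadhan-type behavior on graphs.) Let X be a countable set, G a connected simple graph on X with combinatorial graph distance d_G, and let v : X → H and the bounded nonnegative self-adjoint operator L on the complex Hilbert space H be a Laplacian based on G with respect to v. Then for all x, y ∈ X, the limit as t → 0⁺ of t · log|⟪v x, e^{−tL} (v y)⟫| exists and equals 0. -/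
open scoped InnerProductSpace
open Filter Topology
open scoped Nat

/-- **Failure of Varadhan-type behavior on graphs.** Let `G` be a connected simple graph
on a countable set `X`, `v : X → H` a family of nonzero pairwise orthogonal vectors with
dense span in the complex Hilbert space `H`, and `L` a bounded nonnegative selfadjoint
operator which is a Laplacian based on `G` with respect to `v`. Then
`t · log|⟪v x, e^{−tL} v y⟫| → 0` as `t → 0⁺`. -/
theorem failure_of_varadhan
    {X : Type*} [Countable X] (G : SimpleGraph X) (hG : G.Connected)
    {H : Type*} [NormedAddCommGroup H] [InnerProductSpace ℂ H] [CompleteSpace H]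
    (v : X → H) (hv : ∀ x, v x ≠ 0)
    (horth : ∀ x y : X, x ≠ y → ⟪v x, v y⟫_ℂ = 0)
    (hdense : Dense ((Submodule.span ℂ (Set.range v) : Submodule ℂ H) : Set H))
    (L : H →L[ℂ] H) (hL : IsSelfAdjoint L)
    (hpos : ∀ f : H, 0 ≤ (⟪f, L f⟫_ℂ).re)
    (hlap : ∀ x y : X, x ≠ y →
      (⟪v x, L (v y)⟫_ℂ).im = 0 ∧ (⟪v x, L (v y)⟫_ℂ).re ≤ 0 ∧
        ((⟪v x, L (v y)⟫_ℂ).re < 0 ↔ G.Adj x y)) :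
    ∀ x y : X,
      Tendsto (fun t : ℝ =>
          t * Real.log ‖⟪v x, (NormedSpace.exp ((-(t : ℂ)) • L)) (v y)⟫_ℂ‖)
        (𝓝[>] (0 : ℝ)) (𝓝 (0 : ℝ)) := by
  classical
  set e : X → H := fun z => ((‖v z‖ : ℂ))⁻¹ • v z with he_def
  have hnorm : ∀ z, (‖v z‖ : ℝ) ≠ 0 := fun z => norm_ne_zero_iff.mpr (hv z)
  have he : Orthonormal ℂ e := by
    constructor
    · intro z
      simp only [he_def, norm_smul, norm_inv, Complex.norm_real, Real.norm_eq_abs,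
        abs_of_nonneg (norm_nonneg (v z))]
      field_simp [hnorm z]
    · intro i j hij
      simp [he_def, inner_smul_left, inner_smul_right, horth i j hij]
  have hsp : ⊤ ≤ (Submodule.span ℂ (Set.range e)).topologicalClosure := by
    have hseq : Submodule.span ℂ (Set.range e) = Submodule.span ℂ (Set.range v) := by
      apply le_antisymm
      · rw [Submodule.span_le]; rintro _ ⟨z, rfl⟩
        exact Submodule.smul_mem _ _ (Submodule.subset_span ⟨z, rfl⟩)
      · rw [Submodule.span_le]; rintro _ ⟨z, rfl⟩
        have hvz : v z = (‖v z‖ : ℂ) • e z := by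
          rw [he_def]; rw [smul_smul, mul_inv_cancel₀ (by exact_mod_cast hnorm z), one_smul]
        rw [hvz]
        exact Submodule.smul_mem _ _ (Submodule.subset_span ⟨z, rfl⟩)
    rw [hseq, (Submodule.dense_iff_topologicalClosure_eq_top.mp hdense)]
  set bas : HilbertBasis X ℂ H := HilbertBasis.mk he hsp with hbas_def
  have hb : ⇑bas = e := HilbertBasis.coe_mk _ _
  set B : ℕ → X → X → ℂ := fun k a c => ⟪v a, (L ^ k) (v c)⟫_ℂ with hBdef
  have hself : ∀ (k : ℕ) (f g : H), ⟪(L ^ k) f, g⟫_ℂ = ⟪f, (L ^ k) g⟫_ℂ := by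
    intro k f g
    have h1 : ContinuousLinearMap.adjoint (L ^ k) = L ^ k :=
      ContinuousLinearMap.isSelfAdjoint_iff'.mp (hL.pow k)
    conv_lhs => rw [← h1]
    exact ContinuousLinearMap.adjoint_inner_left _ _ _
  have hB1eq : ∀ z c, B 1 z c = ⟪v z, L (v c)⟫_ℂ := by
    intro z c; simp [hBdef]
  have hB1im : ∀ z c, (B 1 z c).im = 0 := by
    intro z c
    rcases eq_or_ne z c with rfl | hzc
    · rw [hB1eq]
      have h2 : ⟪L (v z), v z⟫_ℂ = ⟪v z, L (v z)⟫_ℂ := by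
        have := hself 1 (v z) (v z); simpa using this
      have h3 : (starRingEnd ℂ) ⟪v z, L (v z)⟫_ℂ = ⟪v z, L (v z)⟫_ℂ :=
        (inner_conj_symm _ _).trans h2
      exact Complex.conj_eq_iff_im.mp h3
    · exact (hlap z c hzc).1
  have hrec : ∀ (k : ℕ) (a c : X),
      HasSum (fun z => (((‖v z‖ : ℂ))⁻¹ * B k a z) * (((‖v z‖ : ℂ))⁻¹ * B 1 z c))
        (B (k + 1) a c) := by
    intro k a c
    have h0 := bas.hasSum_inner_mul_inner ((L ^ k) (v a)) (L (v c))
    have h1 : ⟪(L ^ k) (v a), L (v c)⟫_ℂ = B (k + 1) a c := by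
      rw [hself k]
      show ⟪v a, (L ^ k) (L (v c))⟫_ℂ = ⟪v a, (L ^ (k + 1)) (v c)⟫_ℂ
      rw [pow_succ]
      rfl
    rw [h1] at h0
    have h2 : (fun z => ⟪(L ^ k) (v a), bas z⟫_ℂ * ⟪bas z, L (v c)⟫_ℂ)
        = fun z => (((‖v z‖ : ℂ))⁻¹ * B k a z) * (((‖v z‖ : ℂ))⁻¹ * B 1 z c) := by
      funext z
      rw [hb]
      simp only [he_def]
      rw [hself k, map_smul, inner_smul_right, inner_smul_left, hB1eq]
      rw [map_inv₀, Complex.conj_ofReal]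
    rwa [h2] at h0
  have hreal : ∀ p : ℂ, p.im = 0 → p = ((p.re : ℝ) : ℂ) := by
    intro p hp
    exact Complex.ext (by simp) (by simp [hp])
  have key : ∀ (k : ℕ) (a c : X),
      (B k a c).im = 0 ∧ (k < G.dist a c → B k a c = 0) ∧
        (G.dist a c = k → 0 < (-1 : ℝ) ^ k * (B k a c).re) := by
    intro k
    induction k with
    | zero =>
      intro a c
      have hB0 : B 0 a c = ⟪v a, v c⟫_ℂ := by simp [hBdef]
      rcases eq_or_ne a c with rfl | hac
      · have hBa : B 0 a a = ((‖v a‖ ^ 2 : ℝ) : ℂ) := by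
          rw [hB0, inner_self_eq_norm_sq_to_K]; norm_cast
        refine ⟨by rw [hBa]; exact Complex.ofReal_im _, fun hlt => ?_, fun _ => ?_⟩
        · rw [SimpleGraph.dist_self] at hlt; omega
        · rw [hBa]
          simp only [pow_zero, one_mul, Complex.ofReal_re]
          have := hnorm a
          positivity
      · have h0 : B 0 a c = 0 := by rw [hB0, horth a c hac]
        refine ⟨by simp [h0], fun _ => h0, fun hd => ?_⟩
        exact absurd (hG.dist_eq_zero_iff.mp hd) hac
    | succ k ih =>
      intro a c
      have hs := hrec k a c
      set U : X → ℝ := fun z =>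
        (‖v z‖⁻¹ * (B k a z).re) * (‖v z‖⁻¹ * (B 1 z c).re) with hUdef
      have hWU : (fun z => (((‖v z‖ : ℂ))⁻¹ * B k a z) * (((‖v z‖ : ℂ))⁻¹ * B 1 z c))
          = fun z => ((U z : ℝ) : ℂ) := by
        funext z
        rw [hreal (B k a z) (ih a z).1, hreal (B 1 z c) (hB1im z c), hUdef]
        push_cast
        ring
      rw [hWU] at hs
      have him : (B (k + 1) a c).im = 0 := by
        have h4 := hs.mapL Complex.imCLM
        simp only [Complex.imCLM_apply, Complex.ofReal_im] at h4
        exact h4.unique hasSum_zero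
      have hre : HasSum U ((B (k + 1) a c).re) := by
        have h4 := hs.mapL Complex.reCLM
        simpa using h4
      -- distance facts
      have hdistz : ∀ z, G.Adj z c → G.dist a c ≤ G.dist a z + 1 := by
        intro z hadj
        have h1 : G.dist z c = 1 := SimpleGraph.dist_eq_one_iff_adj.mpr hadj
        have h2 := hG.dist_triangle (u := a) (v := z) (w := c)
        omega
      have hB1z : ∀ z, z ≠ c → ¬ G.Adj z c → (B 1 z c).re = 0 := by
        intro z hzc hadj
        obtain ⟨_, hle, hiff⟩ := hlap z c hzc
        rw [hB1eq]
        exact le_antisymm hle (not_lt.mp fun h => hadj (hiff.mp h))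
      refine ⟨him, ?_, ?_⟩
      · intro hlt
        have hz : ∀ z, U z = 0 := by
          intro z
          rcases eq_or_ne z c with rfl | hzc
          · have h5 : B k a z = 0 := (ih a z).2.1 (by omega)
            simp [hUdef, h5]
          · by_cases hadj : G.Adj z c
            · have h6 : k < G.dist a z := by have := hdistz z hadj; omega
              have h5 : B k a z = 0 := (ih a z).2.1 h6
              simp [hUdef, h5]
            · simp [hUdef, hB1z z hzc hadj]
        have h7 : (B (k + 1) a c).re = 0 := by
          rw [show U = fun _ => (0 : ℝ) from funext hz] at hre
          exact (hre.unique hasSum_zero)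
        rw [hreal _ him, h7]
        simp
      · intro hd
        have h8 : HasSum (fun z => (-1 : ℝ) ^ (k + 1) * U z)
            ((-1 : ℝ) ^ (k + 1) * (B (k + 1) a c).re) := hre.mul_left _
        have hnonneg : ∀ z, 0 ≤ (-1 : ℝ) ^ (k + 1) * U z := by
          intro z
          rcases eq_or_ne z c with rfl | hzc
          · have h5 : B k a z = 0 := (ih a z).2.1 (by omega)
            simp [hUdef, h5]
          · by_cases hadj : G.Adj z c
            · have h9 : k ≤ G.dist a z := by have := hdistz z hadj; omega
              rcases eq_or_lt_of_le h9 with heq | hlt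
              · have h10 := (ih a z).2.2 heq.symm
                have h11 : (B 1 z c).re < 0 := by
                  rw [hB1eq]; exact ((hlap z c hzc).2.2).mpr hadj
                have h12 : (-1 : ℝ) ^ (k + 1) * U z
                    = (‖v z‖⁻¹ * ((-1 : ℝ) ^ k * (B k a z).re))
                      * (‖v z‖⁻¹ * (-(B 1 z c).re)) := by
                  rw [hUdef, pow_succ]; ring
                rw [h12]
                have hvz : (0 : ℝ) < ‖v z‖⁻¹ := by
                  have := (hnorm z); positivity
                exact le_of_lt (mul_pos (mul_pos hvz h10) (mul_pos hvz (by linarith)))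
              · have h5 : B k a z = 0 := (ih a z).2.1 hlt
                simp [hUdef, h5]
            · simp [hUdef, hB1z z hzc hadj]
        -- find a strictly positive term
        obtain ⟨p, hp⟩ := hG.exists_walk_length_eq_dist c a
        rw [SimpleGraph.dist_comm, hd] at hp
        cases p with
        | nil => simp at hp
        | @cons _ z0 _ hadjc q =>
          have hqlen : q.length = k := by
            rw [SimpleGraph.Walk.length_cons] at hp; omega
          have hdaz0 : G.dist a z0 = k := by
            have h13 : G.dist a z0 ≤ k := by
              have := SimpleGraph.dist_le q.reverse
              rwa [SimpleGraph.Walk.length_reverse, hqlen] at this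
            have h14 := hdistz z0 hadjc.symm
            omega
          have hz0c : z0 ≠ c := by
            intro hzz
            rw [hzz] at hdaz0
            omega
          have hposz0 : 0 < (-1 : ℝ) ^ (k + 1) * U z0 := by
            have h10 := (ih a z0).2.2 hdaz0
            have h11 : (B 1 z0 c).re < 0 := by
              rw [hB1eq]; exact ((hlap z0 c hz0c).2.2).mpr hadjc.symm
            have h12 : (-1 : ℝ) ^ (k + 1) * U z0
                = (‖v z0‖⁻¹ * ((-1 : ℝ) ^ k * (B k a z0).re))
                  * (‖v z0‖⁻¹ * (-(B 1 z0 c).re)) := by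
              rw [hUdef, pow_succ]; ring
            rw [h12]
            have hvz : (0 : ℝ) < ‖v z0‖⁻¹ := by
              have := (hnorm z0); positivity
            exact mul_pos (mul_pos hvz h10) (mul_pos hvz (by linarith))
          have h17 : 0 < (-1 : ℝ) ^ (k + 1) * (B (k + 1) a c).re := by
            rw [← h8.tsum_eq]
            exact Summable.tsum_pos h8.summable hnonneg z0 hposz0
          exact h17
  have main : ∀ x y : X,
      Tendsto (fun t : ℝ =>
          t * Real.log ‖⟪v x, (NormedSpace.exp ((-(t : ℂ)) • L)) (v y)⟫_ℂ‖)
        (𝓝[>] (0 : ℝ)) (𝓝 (0 : ℝ)) := by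
    intro x y
    set n : ℕ := G.dist x y with hn
    set r : ℕ → ℝ := fun k => (B k x y).re with hr
    set a : ℕ → ℝ := fun k => (-1 : ℝ) ^ k * r k / (k ! : ℝ) with ha
    set C : ℝ := ‖v x‖ * ‖v y‖ with hC
    set M : ℝ := ‖L‖ with hM
    have hM0 : 0 ≤ M := norm_nonneg L
    have hC0 : 0 ≤ C := mul_nonneg (norm_nonneg _) (norm_nonneg _)
    have hLk : ∀ k : ℕ, ‖(L ^ k) (v y)‖ ≤ M ^ k * ‖v y‖ := by
      intro k
      induction k with
      | zero => simp
      | succ k ih =>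
        have h1 : (L ^ (k + 1)) (v y) = L ((L ^ k) (v y)) := by
          rw [pow_succ']; rfl
        rw [h1]
        calc ‖L ((L ^ k) (v y))‖ ≤ M * ‖(L ^ k) (v y)‖ := L.le_opNorm _
          _ ≤ M * (M ^ k * ‖v y‖) := mul_le_mul_of_nonneg_left ih hM0
          _ = M ^ (k + 1) * ‖v y‖ := by ring
    have habs : ∀ k : ℕ, |a k| ≤ C * M ^ k / k ! := by
      intro k
      have h2 : |(B k x y).re| ≤ ‖B k x y‖ := by
        exact Complex.abs_re_le_norm _
      have h3 : ‖B k x y‖ ≤ ‖v x‖ * ‖(L ^ k) (v y)‖ := norm_inner_le_norm _ _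
      have h1 : |r k| ≤ C * M ^ k := by
        calc |r k| ≤ ‖v x‖ * ‖(L ^ k) (v y)‖ := le_trans h2 h3
          _ ≤ ‖v x‖ * (M ^ k * ‖v y‖) := mul_le_mul_of_nonneg_left (hLk k) (norm_nonneg _)
          _ = C * M ^ k := by rw [hC]; ring
      have h5 : |a k| = |r k| / k ! := by
        rw [ha]
        rw [abs_div, abs_mul, abs_pow, abs_neg, abs_one, one_pow, one_mul, Nat.abs_cast]
      rw [h5]
      have hk : (0:ℝ) < ((k ! : ℕ) : ℝ) := by positivity
      exact div_le_div_of_nonneg_right h1 hk.le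
    have hshift : ∀ m j : ℕ, |a (j + m)| ≤ (C * M ^ m) * (M ^ j / j !) := by
      intro m j
      have h1 := habs (j + m)
      have h2 : ((j ! : ℕ) : ℝ) ≤ (((j + m)! : ℕ) : ℝ) := by
        exact_mod_cast Nat.factorial_le (Nat.le_add_right j m)
      have hj : (0:ℝ) < ((j ! : ℕ) : ℝ) := by positivity
      have hCM : (0:ℝ) ≤ C * M ^ (j + m) := mul_nonneg hC0 (pow_nonneg hM0 _)
      calc |a (j + m)| ≤ C * M ^ (j + m) / (j + m)! := h1
        _ ≤ C * M ^ (j + m) / j ! := div_le_div_of_nonneg_left hCM hj h2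
        _ = (C * M ^ m) * (M ^ j / j !) := by rw [pow_add]; ring
    have hfsum : ∀ t : ℝ,
        HasSum (fun k : ℕ => ((a k * t ^ k : ℝ) : ℂ))
          ⟪v x, (NormedSpace.exp ((-(t : ℂ)) • L)) (v y)⟫_ℂ := by
      intro t
      have hexp := NormedSpace.exp_series_hasSum_exp' (𝕂 := ℂ) ((-(t : ℂ)) • L)
      set Φ : (H →L[ℂ] H) →L[ℂ] ℂ :=
        (innerSL ℂ (v x)).comp ((ContinuousLinearMap.apply ℂ H) (v y)) with hPhi
      have h2 := hexp.mapL Φ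
      have h3 : (fun k : ℕ => Φ (((k ! : ℂ))⁻¹ • ((-(t : ℂ)) • L) ^ k))
          = fun k : ℕ => ((a k * t ^ k : ℝ) : ℂ) := by
        funext k
        have h4 : ((-(t : ℂ)) • L) ^ k = ((-(t : ℂ)) ^ k) • (L ^ k) := smul_pow _ _ _
        rw [hPhi]
        simp only [ContinuousLinearMap.comp_apply, ContinuousLinearMap.apply_apply,
          innerSL_apply_apply, h4, ContinuousLinearMap.smul_apply, inner_smul_right,
          smul_eq_mul]
        have h6 : (⟪v x, (L ^ k) (v y)⟫_ℂ) = ((r k : ℝ) : ℂ) := hreal _ (key k x y).1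
        rw [h6, ha]
        have hk : ((k ! : ℕ) : ℂ) ≠ 0 := by
          exact_mod_cast Nat.cast_ne_zero.mpr (Nat.factorial_ne_zero k)
        field_simp
        push_cast
        rw [mul_comm (k ! : ℂ), div_mul_cancel₀ _ hk, neg_pow]; ring
      have h5 : Φ (NormedSpace.exp ((-(t : ℂ)) • L))
          = ⟪v x, (NormedSpace.exp ((-(t : ℂ)) • L)) (v y)⟫_ℂ := by
        rw [hPhi]
        simp [ContinuousLinearMap.comp_apply, ContinuousLinearMap.apply_apply, innerSL_apply_apply]
      rw [h3, h5] at h2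
      exact h2
    have him : ∀ t : ℝ,
        (⟪v x, (NormedSpace.exp ((-(t : ℂ)) • L)) (v y)⟫_ℂ).im = 0 := by
      intro t
      have h4 := (hfsum t).mapL Complex.imCLM
      simp only [Complex.imCLM_apply, Complex.ofReal_im] at h4
      exact h4.unique hasSum_zero
    obtain ⟨F, hFsum, hFval⟩ : ∃ F : ℝ → ℝ,
        (∀ t : ℝ, HasSum (fun k => a k * t ^ k) (F t)) ∧
          (∀ t : ℝ, ⟪v x, (NormedSpace.exp ((-(t : ℂ)) • L)) (v y)⟫_ℂ
            = ((F t : ℝ) : ℂ)) := by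
      refine ⟨fun t => (⟪v x, (NormedSpace.exp ((-(t : ℂ)) • L)) (v y)⟫_ℂ).re,
        fun t => ?_, fun t => ?_⟩
      · have h4 := (hfsum t).mapL Complex.reCLM
        simp only [Complex.reCLM_apply, Complex.ofReal_re] at h4
        exact h4
      · exact hreal _ (him t)
    have ha0 : ∀ i : ℕ, i < n → a i = 0 := by
      intro i hi
      have h4 : B i x y = 0 := (key i x y).2.1 hi
      have h5 : r i = 0 := by rw [hr]; simp only []; rw [h4]; simp
      rw [ha]; simp only []; rw [h5]; ring
    have han : 0 < a n := by
      have h5 := (key n x y).2.2 rfl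
      have h6 : (0:ℝ) < ((n ! : ℕ) : ℝ) := by positivity
      rw [ha]
      exact div_pos h5 h6
    set g : ℝ → ℝ := fun t => ∑' j : ℕ, a (j + n) * t ^ j with hg
    have hgsum : ∀ t : ℝ, |t| ≤ 1 → Summable (fun j : ℕ => a (j + n) * t ^ j) := by
      intro t ht
      apply Summable.of_norm_bounded (g := fun j : ℕ => (C * M ^ n) * (M ^ j / j !))
        ((Real.summable_pow_div_factorial M).mul_left _)
      intro j
      have hb1 : (0:ℝ) ≤ (C * M ^ n) * (M ^ j / j !) := by
        have : (0:ℝ) < ((j ! : ℕ) : ℝ) := by positivity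
        exact mul_nonneg (mul_nonneg hC0 (pow_nonneg hM0 _))
          (div_nonneg (pow_nonneg hM0 _) this.le)
      calc ‖a (j + n) * t ^ j‖ = |a (j + n)| * |t| ^ j := by
            rw [Real.norm_eq_abs, abs_mul, abs_pow]
        _ ≤ ((C * M ^ n) * (M ^ j / j !)) * 1 :=
            mul_le_mul (hshift n j) (pow_le_one₀ (abs_nonneg t) ht)
              (pow_nonneg (abs_nonneg t) j) hb1
        _ = (C * M ^ n) * (M ^ j / j !) := mul_one _
    have hFg : ∀ t : ℝ, F t = t ^ n * g t := by
      intro t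
      have hsumm := (hFsum t).summable
      have h4 := Summable.sum_add_tsum_nat_add n hsumm
      have h5 : ∑ i ∈ Finset.range n, a i * t ^ i = 0 :=
        Finset.sum_eq_zero fun i hi => by
          rw [ha0 i (Finset.mem_range.mp hi), zero_mul]
      have h6 : (fun j : ℕ => a (j + n) * t ^ (j + n))
          = fun j : ℕ => t ^ n * (a (j + n) * t ^ j) := by
        funext j; rw [pow_add]; ring
      rw [← (hFsum t).tsum_eq, ← h4, h5, zero_add, h6, tsum_mul_left]
    set D : ℝ := C * M ^ (n + 1) * ∑' j : ℕ, M ^ j / j ! with hD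
    have hg1 : ∀ t : ℝ, |t| ≤ 1 → |g t - a n| ≤ D * |t| := by
      intro t ht
      have hsumm := hgsum t ht
      have h4 := Summable.sum_add_tsum_nat_add 1 hsumm
      have h5 : ∑ i ∈ Finset.range 1, a (i + n) * t ^ i = a n := by simp
      have h6 : g t - a n = ∑' j : ℕ, a (j + 1 + n) * t ^ (j + 1) := by
        have h7 : g t = ∑' j : ℕ, a (j + n) * t ^ j := rfl
        rw [h7, ← h4, h5]
        ring
      rw [h6]
      have h7 : ∀ j : ℕ, ‖a (j + 1 + n) * t ^ (j + 1)‖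
          ≤ C * M ^ (n + 1) * (M ^ j / j !) * |t| := by
        intro j
        have h8 : |a (j + (n + 1))| ≤ (C * M ^ (n + 1)) * (M ^ j / j !) := hshift (n + 1) j
        have h9 : j + 1 + n = j + (n + 1) := by omega
        have hb1 : (0:ℝ) ≤ (C * M ^ (n + 1)) * (M ^ j / j !) := by
          have : (0:ℝ) < ((j ! : ℕ) : ℝ) := by positivity
          exact mul_nonneg (mul_nonneg hC0 (pow_nonneg hM0 _))
            (div_nonneg (pow_nonneg hM0 _) this.le)
        rw [Real.norm_eq_abs, abs_mul, abs_pow, h9, pow_succ]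
        calc |a (j + (n + 1))| * (|t| ^ j * |t|) ≤ |a (j + (n + 1))| * (1 * |t|) := by
              gcongr
              exact pow_le_one₀ (abs_nonneg t) ht
          _ = |a (j + (n + 1))| * |t| := by ring
          _ ≤ C * M ^ (n + 1) * (M ^ j / j !) * |t| :=
              mul_le_mul_of_nonneg_right h8 (abs_nonneg t)
      have h10 : HasSum (fun j : ℕ => C * M ^ (n + 1) * (M ^ j / j !) * |t|)
          (D * |t|) :=
        (((Real.summable_pow_div_factorial M).hasSum.mul_left
          (C * M ^ (n + 1))).mul_right |t|)
      have h21 := tsum_of_norm_bounded h10 h7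
      rwa [Real.norm_eq_abs] at h21
    have hIoo : Set.Ioo (0:ℝ) 1 ∈ 𝓝[>] (0:ℝ) :=
      Ioo_mem_nhdsGT_of_mem ⟨le_refl 0, zero_lt_one⟩
    have hgc : Tendsto g (𝓝[>] (0:ℝ)) (𝓝 (a n)) := by
      have h12 : Tendsto (fun t : ℝ => g t - a n) (𝓝[>] (0:ℝ)) (𝓝 0) := by
        apply squeeze_zero_norm' (a := fun t : ℝ => D * |t|)
        · filter_upwards [hIoo] with t ht
          have h13 : |t| ≤ 1 := by
            rw [abs_of_pos ht.1]; exact ht.2.le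
          simpa [Real.norm_eq_abs] using hg1 t h13
        · have h14 : Tendsto (fun t : ℝ => D * |t|) (𝓝 (0:ℝ)) (𝓝 (D * |(0:ℝ)|)) :=
            (continuous_const.mul continuous_abs).tendsto 0
          simpa using h14.mono_left nhdsWithin_le_nhds
      have h14 := h12.add (tendsto_const_nhds (x := a n))
      have h15 : (fun t : ℝ => (g t - a n) + a n) = g := by funext t; ring
      rw [h15, zero_add] at h14
      exact h14
    have hgpos : ∀ᶠ t in 𝓝[>] (0:ℝ), 0 < g t := hgc.eventually (eventually_gt_nhds han)
    have heq : ∀ᶠ (t : ℝ) in 𝓝[>] (0:ℝ),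
        t * Real.log ‖⟪v x, (NormedSpace.exp ((-(t : ℂ)) • L)) (v y)⟫_ℂ‖
          = (n : ℝ) * (t * Real.log t) + t * Real.log (g t) := by
      filter_upwards [hIoo, hgpos] with t ht hgt
      have ht0 : 0 < t := ht.1
      have hnormF : ‖⟪v x, (NormedSpace.exp ((-(t : ℂ)) • L)) (v y)⟫_ℂ‖ = |F t| := by
        rw [hFval t, Complex.norm_real, Real.norm_eq_abs]
      rw [hnormF, hFg t, abs_mul, abs_pow, abs_of_pos ht0, abs_of_pos hgt,
        Real.log_mul (pow_ne_zero n ht0.ne') hgt.ne', Real.log_pow]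
      ring
    have hA : Tendsto (fun t : ℝ => t * Real.log t) (𝓝[>] (0:ℝ)) (𝓝 0) := by
      have h16 := Real.continuous_mul_log.tendsto 0
      simp only [Real.log_zero, mul_zero] at h16
      exact h16.mono_left nhdsWithin_le_nhds
    have hB2 : Tendsto (fun t : ℝ => t * Real.log (g t)) (𝓝[>] (0:ℝ)) (𝓝 0) := by
      have h17 : Tendsto (fun t : ℝ => t) (𝓝[>] (0:ℝ)) (𝓝 (0:ℝ)) :=
        tendsto_id.mono_right nhdsWithin_le_nhds
      have h18 : Tendsto (fun t : ℝ => Real.log (g t)) (𝓝[>] (0:ℝ))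
          (𝓝 (Real.log (a n))) :=
        ((Real.continuousAt_log han.ne').tendsto).comp hgc
      have h19 := h17.mul h18
      simpa using h19
    have h20 := (hA.const_mul (n : ℝ)).add hB2
    simp only [mul_zero, add_zero] at h20
    exact h20.congr' (heq.mono fun t ht => ht.symm)
  exact main
end
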